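/- arXiv:2109.12497 — 4 statements merged into one kernel-verified Lean document; each statement's English description precedes it below -/
import Mathlib

section
/- For a single quantized coordinate, the second moment satisfies E[ξ_i²] ≤ (v_i/W)² + (1/s²)·p, where p = (|v_i|/W)·s − l is the fractional part probability used in the stochastic rounding. -/
/-! Writing the mean as `a + p h`, the second moment of the two-point variable equals
`(a + p h)² + p (1 - p) h²`; dropping the `-p² h²` part of the variance term gives the bound. -/

theorem two_point_second_moment (a h p : ℝ) :
    (1 - p) * a ^ 2 + p * (a + h) ^ 2 = (a + p * h) ^ 2 + p * (1 - p) * h ^ 2 := by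
  ring

theorem two_point_second_moment_le (a h p : ℝ) :
    (1 - p) * a ^ 2 + p * (a + h) ^ 2 ≤ (a + p * h) ^ 2 + p * h ^ 2 := by
  rw [two_point_second_moment]
  linarith [sq_nonneg (p * h)]

theorem qsgd_coord_second_moment_general
    (s : ℕ) (hs : 1 ≤ s) (W vi : ℝ)
    (l : ℕ)
    (p : ℝ) (hp : p = |vi| / W * s - l) :
    (1 - p) * ((l : ℝ) / s) ^ 2 + p * (((l : ℝ) + 1) / s) ^ 2
      ≤ (vi / W) ^ 2 + (1 / (s : ℝ) ^ 2) * p := by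
  have hs0 : (s : ℝ) ≠ 0 := Nat.cast_ne_zero.mpr (by omega)
  have hmean : |vi| / W = l / s + p * (1 / s) := by
    rw [hp]
    field_simp
    ring
  calc (1 - p) * ((l : ℝ) / s) ^ 2 + p * (((l : ℝ) + 1) / s) ^ 2
      = (1 - p) * ((l : ℝ) / s) ^ 2 + p * ((l : ℝ) / s + 1 / s) ^ 2 := by rw [add_div]
    _ ≤ ((l : ℝ) / s + p * (1 / s)) ^ 2 + p * (1 / s) ^ 2 := two_point_second_moment_le _ _ _
    _ = (vi / W) ^ 2 + (1 / (s : ℝ) ^ 2) * p := by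
      rw [← hmean, div_pow, div_pow vi, sq_abs]
      ring

/-- Second-moment bound for a single quantized coordinate:
`E[ξ²] ≤ (vi/W)² + p/s²` where `ξ` is `l/s` with probability `1-p` and
`(l+1)/s` with probability `p`, `p = (|vi|/W)·s - l`. -/
theorem qsgd_coord_second_moment
    (s : ℕ) (hs : 1 ≤ s) (W vi : ℝ) (hW : 0 < W) (hv : |vi| ≤ W)
    (l : ℕ) (hls : l < s)
    (hlo : (l : ℝ) / s ≤ |vi| / W) (hhi : |vi| / W ≤ ((l : ℝ) + 1) / s)
    (p : ℝ) (hp : p = |vi| / W * s - l) :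
    (1 - p) * ((l : ℝ) / s) ^ 2 + p * (((l : ℝ) + 1) / s) ^ 2
      ≤ (vi / W) ^ 2 + (1 / (s : ℝ) ^ 2) * p :=
  qsgd_coord_second_moment_general s hs W vi l p hp
end

section
/- The expected squared L2 norm of the quantized vector satisfies E[‖Q_s(v, W)‖₂²] ≤ (1 + min(n/s², √n/s)) · W², where W ≥ ‖v‖₂. -/
/-!
Rounding `x = (l + p) / s` up with probability `p` and down otherwise has second moment
`x² + p (1 - p) / s²`. The variance term is at most `1 / s²`, and also at most `p / s² ≤ x / s`.
Summing over the normalised coordinates `xᵢ = |vᵢ| / W`, which satisfy `∑ xᵢ² ≤ 1` and hence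
`∑ xᵢ ≤ √n` by Cauchy–Schwarz, gives the bound.
-/

open Finset Real

theorem Real.sign_sq_le_one (r : ℝ) : sign r ^ 2 ≤ 1 := by
  rcases sign_apply_eq r with h | h | h <;> norm_num [h]

theorem sum_le_sqrt_card_of_sum_sq_le_one {ι : Type*} [Fintype ι] {u : ι → ℝ}
    (h : ∑ i, u i ^ 2 ≤ 1) : ∑ i, u i ≤ √(Fintype.card ι) := by
  simpa using (sum_mul_le_sqrt_mul_sqrt univ 1 u).trans
    (mul_le_of_le_one_right (sqrt_nonneg _) (sqrt_le_one.2 h))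

theorem sum_sq_abs_div_le_one {ι : Type*} [Fintype ι] {v : ι → ℝ} {W : ℝ} (hW : 0 < W)
    (h : √(∑ i, v i ^ 2) ≤ W) : ∑ i, (|v i| / W) ^ 2 ≤ 1 := by
  simp_rw [div_pow, sq_abs, ← sum_div]
  rw [div_le_one (by positivity)]
  exact (sqrt_le_left hW.le).1 h

namespace StochasticRounding

variable {x s l p : ℝ}

theorem prob_mem_Icc (hs : 0 < s) (hlo : l / s ≤ x) (hhi : x ≤ (l + 1) / s)
    (hp : p = x * s - l) : p ∈ Set.Icc 0 1 := by
  rw [div_le_iff₀ hs] at hlo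
  rw [le_div_iff₀ hs] at hhi
  constructor <;> linarith

theorem second_moment_eq (l p : ℝ) (hs : s ≠ 0) :
    (1 - p) * (l / s) ^ 2 + p * ((l + 1) / s) ^ 2 = ((l + p) / s) ^ 2 + p * (1 - p) / s ^ 2 := by
  field_simp
  ring

theorem second_moment_nonneg (hp : p ∈ Set.Icc 0 1) :
    0 ≤ (1 - p) * (l / s) ^ 2 + p * ((l + 1) / s) ^ 2 := by
  have : 0 ≤ 1 - p := sub_nonneg.2 hp.2
  have := hp.1
  positivity

theorem second_moment_le (hs : 0 < s) (hl : 0 ≤ l) (hp : p ∈ Set.Icc 0 1)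
    (hpx : p = x * s - l) :
    (1 - p) * (l / s) ^ 2 + p * ((l + 1) / s) ^ 2 ≤ x ^ 2 + min (1 / s ^ 2) (x / s) := by
  have hx : x = (l + p) / s := by
    rw [hpx]
    field_simp
    ring
  have hvar : p * (1 - p) ≤ min 1 (l + p) := by
    obtain ⟨hp0, hp1⟩ := hp
    exact le_min (by nlinarith) (by nlinarith)
  have hmin : min (1 / s ^ 2) (x / s) = min 1 (l + p) / s ^ 2 := by
    rw [hx, div_div, ← sq, min_div_div_right (by positivity)]
  rw [second_moment_eq l p hs.ne', ← hx, hmin]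
  gcongr

theorem sum_sq_add_min_le {ι : Type*} [Fintype ι] {u : ι → ℝ} (hs : 0 < s)
    (h : ∑ i, u i ^ 2 ≤ 1) :
    ∑ i, (u i ^ 2 + min (1 / s ^ 2) (u i / s)) ≤
      1 + min (Fintype.card ι / s ^ 2) (√(Fintype.card ι) / s) := by
  rw [sum_add_distrib]
  refine add_le_add h (sum_min_le.trans (min_le_min ?_ ?_))
  · simp [div_eq_mul_inv]
  · rw [← sum_div]
    gcongr
    exact sum_le_sqrt_card_of_sum_sq_le_one h

end StochasticRounding

open StochasticRounding

open Finset in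
theorem qsgd_maxnorm_second_moment_general
    (n s : ℕ) (hs : 1 ≤ s) (v : Fin n → ℝ) (W : ℝ) (hW : 0 < W)
    (hWv : Real.sqrt (∑ i, v i ^ 2) ≤ W)
    (l : Fin n → ℕ)
    (hlo : ∀ i, (l i : ℝ) / s ≤ |v i| / W)
    (hhi : ∀ i, |v i| / W ≤ ((l i : ℝ) + 1) / s)
    (p : Fin n → ℝ) (hp : ∀ i, p i = |v i| / W * s - l i) :
    ∑ i, (W * Real.sign (v i)) ^ 2 *
        ((1 - p i) * ((l i : ℝ) / s) ^ 2 + p i * (((l i : ℝ) + 1) / s) ^ 2)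
      ≤ (1 + min ((n : ℝ) / (s : ℝ) ^ 2) (Real.sqrt n / s)) * W ^ 2 := by
  have hs0 : (0 : ℝ) < s := by exact_mod_cast hs
  calc ∑ i, (W * Real.sign (v i)) ^ 2 *
        ((1 - p i) * ((l i : ℝ) / s) ^ 2 + p i * (((l i : ℝ) + 1) / s) ^ 2)
      ≤ ∑ i, W ^ 2 * ((|v i| / W) ^ 2 + min (1 / (s : ℝ) ^ 2) (|v i| / W / s)) := by
        refine sum_le_sum fun i _ => ?_
        have hpi := prob_mem_Icc hs0 (hlo i) (hhi i) (hp i)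
        refine mul_le_mul ?_ (second_moment_le hs0 (Nat.cast_nonneg _) hpi (hp i))
          (second_moment_nonneg hpi) (sq_nonneg W)
        rw [mul_pow]
        exact mul_le_of_le_one_right (sq_nonneg W) (sign_sq_le_one _)
    _ ≤ W ^ 2 * (1 + min ((n : ℝ) / (s : ℝ) ^ 2) (√n / s)) := by
        rw [← mul_sum]
        gcongr
        simpa using sum_sq_add_min_le hs0 (sum_sq_abs_div_le_one hW hWv)
    _ = _ := mul_comm _ _

open Finset in
/-- Expected squared L2 norm of the quantized vector:
`E[‖Q_s(v,W)‖₂²] ≤ (1 + min(n/s², √n/s))·W²`, where `Q_s(v,W)ᵢ = W·sign(vᵢ)·ξᵢ`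
with independent stochastic rounding variables `ξᵢ`, so that
`E[‖Q_s(v,W)‖₂²] = Σᵢ (W·sign(vᵢ))²·E[ξᵢ²]`. -/
theorem qsgd_maxnorm_second_moment
    (n s : ℕ) (hs : 1 ≤ s) (v : Fin n → ℝ) (W : ℝ) (hW : 0 < W)
    (hWv : Real.sqrt (∑ i, v i ^ 2) ≤ W)
    (l : Fin n → ℕ) (hls : ∀ i, l i < s)
    (hlo : ∀ i, (l i : ℝ) / s ≤ |v i| / W)
    (hhi : ∀ i, |v i| / W ≤ ((l i : ℝ) + 1) / s)
    (p : Fin n → ℝ) (hp : ∀ i, p i = |v i| / W * s - l i) :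
    ∑ i, (W * Real.sign (v i)) ^ 2 *
        ((1 - p i) * ((l i : ℝ) / s) ^ 2 + p i * (((l i : ℝ) + 1) / s) ^ 2)
      ≤ (1 + min ((n : ℝ) / (s : ℝ) ^ 2) (Real.sqrt n / s)) * W ^ 2 :=
  qsgd_maxnorm_second_moment_general n s hs v W hW hWv l hlo hhi p hp
end

section
/- The quantization variance satisfies E[‖Q_s(v, W) − v‖₂²] ≤ (1 + min(n/s², √n/s)) · W², where W ≥ ‖v‖₂. -/
/-!
Stochastic rounding is unbiased, so the mean squared error of coordinate `i` is the variance
`(W/s)² sign(vᵢ)² pᵢ(1 - pᵢ)` of a two-point variable. Since `p(1 - p) ≤ min 1 p` and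
`pᵢ ≤ s|vᵢ|/W`, Cauchy–Schwarz `∑ |vᵢ| ≤ √n ‖v‖ ≤ √n W` bounds the total by
`min (n/s²) (√n/s) W²`.
-/

open Finset

theorem Real.sign_mul_abs (x : ℝ) : Real.sign x * |x| = x := by
  rcases lt_trichotomy x 0 with hx | rfl | hx
  · rw [Real.sign_of_neg hx, abs_of_neg hx]; ring
  · simp
  · rw [Real.sign_of_pos hx, abs_of_pos hx, one_mul]

theorem Real.sign_sq_of_ne_zero {x : ℝ} (hx : x ≠ 0) : Real.sign x ^ 2 = 1 := by
  rcases Real.sign_apply_eq_of_ne_zero x hx with h | h <;> simp [h]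

theorem two_point_variance {a b p x : ℝ} (hx : (1 - p) * a + p * b = x) :
    (1 - p) * (a - x) ^ 2 + p * (b - x) ^ 2 = p * (1 - p) * (b - a) ^ 2 := by
  subst hx
  ring

theorem Finset.sum_abs_le_sqrt_card_mul_sqrt_sum_sq {ι : Type*} (t : Finset ι) (f : ι → ℝ) :
    ∑ i ∈ t, |f i| ≤ √(#t) * √(∑ i ∈ t, f i ^ 2) := by
  rw [← Real.sqrt_mul (Nat.cast_nonneg _)]
  apply Real.le_sqrt_of_sq_le
  simpa only [sq_abs] using sq_sum_le_card_mul_sum_sq (s := t) (f := fun i => |f i|)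

theorem Finset.sum_min_le_min_sum {ι : Type*} (t : Finset ι) (f : ι → ℝ) (c : ℝ) :
    ∑ i ∈ t, min c (f i) ≤ min (#t * c) (∑ i ∈ t, f i) :=
  le_min ((sum_le_sum fun i _ => min_le_left _ _).trans_eq (by simp))
    (sum_le_sum fun i _ => min_le_right _ _)

section StochasticRounding

variable {x W s p : ℝ} {l : ℕ}

theorem stochasticRounding_mean (hW : W ≠ 0) (hs : s ≠ 0) (hp : p = |x| / W * s - l) :
    (1 - p) * (W * Real.sign x * (l / s)) + p * (W * Real.sign x * ((l + 1) / s)) = x := by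
  calc _ = Real.sign x * |x| := by rw [hp]; field_simp; ring
    _ = x := Real.sign_mul_abs x

theorem stochasticRounding_variance (hW : W ≠ 0) (hs : s ≠ 0) (hp : p = |x| / W * s - l) :
    (1 - p) * (W * Real.sign x * (l / s) - x) ^ 2 + p * (W * Real.sign x * ((l + 1) / s) - x) ^ 2
      = (W / s) ^ 2 * (Real.sign x ^ 2 * (p * (1 - p))) := by
  rw [two_point_variance (stochasticRounding_mean hW hs hp)]
  field_simp
  ring

theorem stochasticRounding_normalizedVariance_le (hp : p = |x| / W * s - l) :
    Real.sign x ^ 2 * (p * (1 - p)) ≤ min 1 (|x| / W * s) := by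
  rcases eq_or_ne x 0 with rfl | hx
  · simp
  rw [Real.sign_sq_of_ne_zero hx, one_mul]
  have hpx : p ≤ |x| / W * s := by rw [hp]; linarith [(Nat.cast_nonneg l : (0 : ℝ) ≤ l)]
  exact le_min (by nlinarith [sq_nonneg (p - 1 / 2)]) (by nlinarith [sq_nonneg p])

end StochasticRounding

open Finset in
theorem qsgd_maxnorm_variance_bound_general
    (n s : ℕ) (hs : 1 ≤ s) (v : Fin n → ℝ) (W : ℝ) (hW : 0 < W)
    (hWv : Real.sqrt (∑ i, v i ^ 2) ≤ W)
    (l : Fin n → ℕ)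
    (p : Fin n → ℝ) (hp : ∀ i, p i = |v i| / W * s - l i) :
    ∑ i, ((1 - p i) * (W * Real.sign (v i) * ((l i : ℝ) / s) - v i) ^ 2
          + p i * (W * Real.sign (v i) * (((l i : ℝ) + 1) / s) - v i) ^ 2)
      ≤ (1 + min ((n : ℝ) / (s : ℝ) ^ 2) (Real.sqrt n / s)) * W ^ 2 := by
  have hsR : (0 : ℝ) < s := by exact_mod_cast hs
  have hsum_abs : ∑ i, |v i| / W * s ≤ √n * s := by
    rw [← sum_mul, ← sum_div]
    gcongr
    rw [div_le_iff₀ hW]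
    simpa using (sum_abs_le_sqrt_card_mul_sqrt_sum_sq univ v).trans
      (mul_le_mul_of_nonneg_left hWv (Real.sqrt_nonneg _))
  calc _ = (W / s) ^ 2 * ∑ i, Real.sign (v i) ^ 2 * (p i * (1 - p i)) := by
        rw [mul_sum]
        exact sum_congr rfl fun i _ => stochasticRounding_variance hW.ne' hsR.ne' (hp i)
    _ ≤ (W / s) ^ 2 * min (n : ℝ) (√n * s) := by
        gcongr
        refine (sum_le_sum fun i _ => stochasticRounding_normalizedVariance_le (hp i)).trans ?_
        simpa using (sum_min_le_min_sum univ _ 1).trans (min_le_min_left _ hsum_abs)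
    _ = min ((n : ℝ) / (s : ℝ) ^ 2) (Real.sqrt n / s) * W ^ 2 := by
        rw [mul_min_of_nonneg _ _ (by positivity), min_mul_of_nonneg _ _ (by positivity)]
        congr 1 <;> field_simp
    _ ≤ _ := by gcongr; linarith

open Finset in
/-- Quantization variance bound:
`E[‖Q_s(v,W) - v‖₂²] ≤ (1 + min(n/s², √n/s))·W²`, where the expectation is
written out explicitly coordinatewise over the two-point stochastic rounding
distribution (`Q_s(v,W)ᵢ` equals `W·sign(vᵢ)·(l i)/s` with probability `1 - pᵢ`
and `W·sign(vᵢ)·(l i + 1)/s` with probability `pᵢ`). -/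
theorem qsgd_maxnorm_variance_bound
    (n s : ℕ) (hs : 1 ≤ s) (v : Fin n → ℝ) (W : ℝ) (hW : 0 < W)
    (hWv : Real.sqrt (∑ i, v i ^ 2) ≤ W)
    (l : Fin n → ℕ) (hls : ∀ i, l i < s)
    (hlo : ∀ i, (l i : ℝ) / s ≤ |v i| / W)
    (hhi : ∀ i, |v i| / W ≤ ((l i : ℝ) + 1) / s)
    (p : Fin n → ℝ) (hp : ∀ i, p i = |v i| / W * s - l i) :
    ∑ i, ((1 - p i) * (W * Real.sign (v i) * ((l i : ℝ) / s) - v i) ^ 2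
          + p i * (W * Real.sign (v i) * (((l i : ℝ) + 1) / s) - v i) ^ 2)
      ≤ (1 + min ((n : ℝ) / (s : ℝ) ^ 2) (Real.sqrt n / s)) * W ^ 2 :=
  qsgd_maxnorm_variance_bound_general n s hs v W hW hWv l p hp
end

section
/- In the multi-scale scheme, the chosen scale never causes overflow: if s*_i is the largest scale s ∈ s̲ satisfying s ≤ (W/|v_i|)·ŝ with ŝ = min s̲, then the quantized integer level sign(v_i)·s*_i·ξ_i has absolute value at most ŝ + 1, i.e., the grid index l+1 for coordinate i at scale s*_i satisfies l + 1 ≤ ŝ + 1. -/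
theorem le_of_div_le_of_le_inv_mul {K : Type*} [Field K] [LinearOrder K] [IsStrictOrderedRing K]
    {a b s x : K} (ha : 0 ≤ a) (hb : 0 ≤ b) (hs : 0 < s) (hlo : a / s ≤ x) (hle : s ≤ x⁻¹ * b) :
    a ≤ b := by
  have hx : 0 ≤ x := (div_nonneg ha hs.le).trans hlo
  calc a ≤ x * s := (div_le_iff₀ hs).1 hlo
    _ ≤ x * (x⁻¹ * b) := mul_le_mul_of_nonneg_left hle hx
    _ = x * x⁻¹ * b := (mul_assoc _ _ _).symm
    _ ≤ b := mul_le_of_le_one_left hb mul_inv_le_one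

theorem multiscale_no_overflow_general
    (S : Finset ℕ) (hSne : S.Nonempty) (hSpos : ∀ s ∈ S, 1 ≤ s)
    (W vi : ℝ)
    (sstar : ℕ) (hmem : sstar ∈ S)
    (hle : (sstar : ℝ) ≤ W / |vi| * (S.min' hSne : ℝ))
    (l : ℕ)
    (hlo : (l : ℝ) / sstar ≤ |vi| / W) :
    l ≤ S.min' hSne ∧ l + 1 ≤ S.min' hSne + 1 := by
  have hsstar : (0 : ℝ) < sstar := by exact_mod_cast hSpos sstar hmem
  have hl : l ≤ S.min' hSne := by
    rw [← inv_div] at hle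
    exact_mod_cast le_of_div_le_of_le_inv_mul l.cast_nonneg (Nat.cast_nonneg _) hsstar hlo hle
  exact ⟨hl, Nat.succ_le_succ hl⟩

/-- No overflow in the multi-scale scheme: if `sstar` is the
largest scale `s ∈ S` with `(s : ℝ) ≤ (W/|vi|)·ŝ` (`ŝ = min S`), and `l` is
the grid index of `|vi|/W` at scale `sstar`, then `l ≤ ŝ`
(hence the quantized integer level `l + 1 ≤ ŝ + 1`). -/
theorem multiscale_no_overflow
    (S : Finset ℕ) (hSne : S.Nonempty) (hSpos : ∀ s ∈ S, 1 ≤ s)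
    (W vi : ℝ) (hW : 0 < W) (hvi : vi ≠ 0) (hv : |vi| ≤ W)
    (sstar : ℕ) (hmem : sstar ∈ S)
    (hle : (sstar : ℝ) ≤ W / |vi| * (S.min' hSne : ℝ))
    (hmax : ∀ s ∈ S, (s : ℝ) ≤ W / |vi| * (S.min' hSne : ℝ) → s ≤ sstar)
    (l : ℕ)
    (hlo : (l : ℝ) / sstar ≤ |vi| / W)
    (hhi : |vi| / W ≤ ((l : ℝ) + 1) / sstar) :
    l ≤ S.min' hSne ∧ l + 1 ≤ S.min' hSne + 1 :=
  multiscale_no_overflow_general S hSne hSpos W vi sstar hmem hle l hlo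
end
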